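/- arXiv:2602.03949 — 2 statements merged into one kernel-verified Lean document; each statement's English description precedes it below -/
import Mathlib

section
/- Let Σ_X be symmetric positive definite k×k and W̃ symmetric positive definite k×k, and R > 0. Define K*(R) = ν(R) W̃⁻¹ with ν(R) = exp((1/k)(log det Σ_X + log det W̃ − 2R)). Then K*(R) satisfies the active rate constraint (1/2) log(det Σ_X / det K*(R)) = R, and tr(W̃ K*(R)) = k (det Σ_X · det W̃)^{1/k} exp(−2R/k). -/
open Matrix

/-- Theorem 7 (interior solution): with `K*(R) = ν(R) W̃⁻¹` and
`ν(R) = exp((1/k)(log det Σ_X + log det W̃ − 2R))`, the rate constraint is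
active, `(1/2) log(det Σ_X / det K*(R)) = R`, and the optimal semantic
distortion is `tr(W̃ K*(R)) = k (det Σ_X · det W̃)^{1/k} exp(−2R/k)`. -/
theorem interior_solution_matrix {k : ℕ} (hk : 0 < k)
    (SX Wt : Matrix (Fin k) (Fin k) ℝ)
    (hSX : SX.PosDef) (hWt : Wt.PosDef) (R : ℝ) (hR : 0 < R) :
    let ν : ℝ := Real.exp ((1 / (k : ℝ)) *
      (Real.log SX.det + Real.log Wt.det - 2 * R))
    let Kstar : Matrix (Fin k) (Fin k) ℝ := ν • Wt⁻¹
    (1 / 2 : ℝ) * Real.log (SX.det / Kstar.det) = R ∧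
    (Wt * Kstar).trace
      = (k : ℝ) * (SX.det * Wt.det) ^ ((1 : ℝ) / (k : ℝ))
          * Real.exp (-(2 * R) / (k : ℝ)) := by
  intro ν Kstar
  have hkR : (0 : ℝ) < k := Nat.cast_pos.mpr hk
  have hkne : (k : ℝ) ≠ 0 := ne_of_gt hkR
  have hSXd : 0 < SX.det := hSX.det_pos
  have hWtd : 0 < Wt.det := hWt.det_pos
  have hWtinv : Wt⁻¹.det = Wt.det⁻¹ := by simp [Matrix.det_nonsing_inv, Ring.inverse_eq_inv]
  have hνpow : ν ^ k = Real.exp (Real.log SX.det + Real.log Wt.det - 2 * R) := by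
    rw [show ν = Real.exp ((1 / (k : ℝ)) *
      (Real.log SX.det + Real.log Wt.det - 2 * R)) from rfl,
      ← Real.exp_nat_mul]
    congr 1
    field_simp
  have hKdet : Kstar.det = ν ^ k * Wt.det⁻¹ := by
    simp [Kstar, Matrix.det_smul, hWtinv]
  constructor
  · have : SX.det / Kstar.det = Real.exp (2 * R) := by
      rw [hKdet, hνpow]
      rw [show Real.log SX.det + Real.log Wt.det - 2 * R
          = (Real.log SX.det + Real.log Wt.det) + (-(2 * R)) by ring,
        Real.exp_add, ← Real.log_mul (ne_of_gt hSXd) (ne_of_gt hWtd),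
        Real.exp_log (mul_pos hSXd hWtd)]
      rw [Real.exp_neg]
      field_simp [hSXd.ne', hWtd.ne', Real.exp_ne_zero]
    rw [this, Real.log_exp]; ring
  · have hunit : Wt * Wt⁻¹ = 1 := Matrix.mul_nonsing_inv Wt hWt.det_pos.ne'.isUnit
    have htr : (Wt * Kstar).trace = ν * k := by
      simp [Kstar, Matrix.mul_smul, hunit, Matrix.trace_smul]
      try ring
    rw [htr]
    have hν : ν = (SX.det * Wt.det) ^ ((1 : ℝ) / (k : ℝ))
        * Real.exp (-(2 * R) / (k : ℝ)) := by
      rw [Real.rpow_def_of_pos (mul_pos hSXd hWtd),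
        Real.log_mul (ne_of_gt hSXd) (ne_of_gt hWtd), ← Real.exp_add]
      show Real.exp ((1 / (k : ℝ)) * (Real.log SX.det + Real.log Wt.det - 2 * R)) = _
      congr 1
      field_simp
      ring
    rw [hν]; ring
end

section
/- Consider minimizing Σ_{i=1}^k q_i k_i over k_i ∈ (0, σ_i²] subject to Σ_i log k_i ≥ Σ_i log σ_i² − 2R, where q_i > 0, σ_i > 0, R > 0. The optimal solution is k_i* = min{σ_i², ν*/q_i} with ν* > 0 chosen so Σ_i log(σ_i²/k_i*) = 2R. In the interior regime (k_i* < σ_i² for all i), ν* = exp((1/k)(Σ_i log(q_i σ_i²) − 2R)) and the optimal objective value equals k·ν*. -/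
open Finset

private lemma aux_pointwise (ν q x m : ℝ) (hν : 0 < ν) (hq : 0 < q) (hx : 0 < x) (hm : 0 < m)
    (h : m = ν / q ∨ (x ≤ m ∧ q * m ≤ ν)) :
    q * m - ν * Real.log m ≤ q * x - ν * Real.log x := by
  rcases h with h | ⟨hxm, hqm⟩
  · subst h
    have h1 : Real.log (q * x / ν) ≤ q * x / ν - 1 :=
      Real.log_le_sub_one_of_pos (by positivity)
    rw [Real.log_div (by positivity) hν.ne', Real.log_mul hq.ne' hx.ne'] at h1
    rw [Real.log_div hν.ne' hq.ne']
    have h2 : ν * (Real.log q + Real.log x - Real.log ν) ≤ ν * (q * x / ν - 1) :=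
      mul_le_mul_of_nonneg_left h1 hν.le
    have h3 : ν * (q * x / ν - 1) = q * x - ν := by field_simp
    have h4 : q * (ν / q) = ν := by field_simp
    nlinarith
  · have h1 : Real.log (x / m) ≤ x / m - 1 :=
      Real.log_le_sub_one_of_pos (by positivity)
    rw [Real.log_div hx.ne' hm.ne'] at h1
    have h2 : m * (Real.log x - Real.log m) ≤ m * (x / m - 1) :=
      mul_le_mul_of_nonneg_left h1 hm.le
    have h3 : m * (x / m - 1) = x - m := by field_simp
    have h4 : m * (Real.log x - Real.log m) ≤ x - m := h2.trans_eq h3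
    have h5 : ν * (m * (Real.log x - Real.log m)) ≤ ν * (x - m) :=
      mul_le_mul_of_nonneg_left h4 hν.le
    have h6 : ν * (x - m) ≤ q * m * (x - m) := by
      have := sub_nonpos.mpr hxm
      nlinarith
    nlinarith [mul_pos hν hm]

/-- Corollary 1 (remote reverse waterfilling): for the program
minimize `∑ q_i k_i` over `k_i ∈ (0, σ_i²]` subject to
`∑ log k_i ≥ ∑ log σ_i² − 2R`, there is `ν* > 0` such that
`k_i* = min{σ_i², ν*/q_i}` is optimal and `∑ log(σ_i²/k_i*) = 2R`;
if moreover `k_i* < σ_i²` for all `i` (interior regime), then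
`ν* = exp((1/k)(∑ log(q_i σ_i²) − 2R))` and the optimal value is `k ν*`. -/
theorem remote_reverse_waterfilling {k : ℕ} (q σ : Fin k → ℝ) (R : ℝ)
    (hk : 0 < k) (hq : ∀ i, 0 < q i) (hσ : ∀ i, 0 < σ i) (hR : 0 < R) :
    ∃ ν : ℝ, 0 < ν ∧
      (∑ i, Real.log ((σ i) ^ 2 / min ((σ i) ^ 2) (ν / q i)) = 2 * R) ∧
      (∀ x : Fin k → ℝ, (∀ i, 0 < x i) → (∀ i, x i ≤ (σ i) ^ 2) →
        (∑ i, Real.log (x i) ≥ (∑ i, Real.log ((σ i) ^ 2)) - 2 * R) →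
        ∑ i, q i * min ((σ i) ^ 2) (ν / q i) ≤ ∑ i, q i * x i) ∧
      ((∀ i, min ((σ i) ^ 2) (ν / q i) < (σ i) ^ 2) →
        ν = Real.exp ((1 / (k : ℝ)) *
              ((∑ i, Real.log (q i * (σ i) ^ 2)) - 2 * R)) ∧
        ∑ i, q i * min ((σ i) ^ 2) (ν / q i) = (k : ℝ) * ν) := by
  have hne : (univ : Finset (Fin k)).Nonempty := by
    have : Nonempty (Fin k) := ⟨⟨0, hk⟩⟩
    exact univ_nonempty
  set c : Fin k → ℝ := fun i => Real.log (q i * (σ i) ^ 2) with hc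
  set g : ℝ → ℝ := fun t => ∑ i, max (c i - t) 0 with hg
  have hgcont : Continuous g := by
    apply continuous_finset_sum
    intro i _
    exact (continuous_const.sub continuous_id).max continuous_const
  have i0 : Fin k := ⟨0, hk⟩
  set a : ℝ := c i0 - 2 * R with ha
  set b : ℝ := univ.sup' hne c with hb
  have hab : a ≤ b := by
    have := le_sup' c (mem_univ i0)
    simp only [← hb] at this
    linarith
  have hga : 2 * R ≤ g a := by
    have h1 : max (c i0 - a) 0 ≤ ∑ i, max (c i - a) 0 :=
      single_le_sum (f := fun i => max (c i - a) 0) (fun i _ => le_max_right _ _) (mem_univ i0)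
    have h2 : max (c i0 - a) 0 = 2 * R := by
      rw [ha, max_eq_left (by linarith)]; ring
    calc 2 * R = max (c i0 - a) 0 := h2.symm
      _ ≤ ∑ i, max (c i - a) 0 := h1
      _ = g a := rfl
  have hgb : g b = 0 := by
    apply sum_eq_zero
    intro i _
    exact max_eq_right (sub_nonpos.mpr (le_sup' c (mem_univ i)))
  have hmem : 2 * R ∈ Set.Icc (g b) (g a) := ⟨by rw [hgb]; linarith, hga⟩
  obtain ⟨t, -, hgt⟩ := intermediate_value_Icc' hab hgcont.continuousOn hmem
  simp only [hg] at hgt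
  set ν : ℝ := Real.exp t with hνdef
  have hν : 0 < ν := Real.exp_pos t
  have hmpos : ∀ i, 0 < min ((σ i) ^ 2) (ν / q i) := fun i =>
    lt_min (pow_pos (hσ i) 2) (div_pos hν (hq i))
  have hterm : ∀ i, Real.log ((σ i) ^ 2 / min ((σ i) ^ 2) (ν / q i)) = max (c i - t) 0 := by
    intro i
    have hσ2 : (0:ℝ) < (σ i) ^ 2 := pow_pos (hσ i) 2
    rcases le_total (ν / q i) ((σ i) ^ 2) with h | h
    · rw [min_eq_right h, Real.log_div hσ2.ne' (div_pos hν (hq i)).ne',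
        Real.log_div hν.ne' (hq i).ne', hνdef, Real.log_exp]
      have hct : t ≤ c i := by
        have h1 : Real.exp t ≤ q i * (σ i) ^ 2 := by
          rw [div_le_iff₀ (hq i)] at h
          nlinarith [h]
        have := Real.log_le_log (Real.exp_pos t) h1
        rwa [Real.log_exp] at this
      rw [max_eq_left (by linarith)]
      simp only [hc]
      rw [Real.log_mul (hq i).ne' hσ2.ne']
      ring
    · rw [min_eq_left h, div_self hσ2.ne', Real.log_one]
      have hct : c i ≤ t := by
        have h1 : q i * (σ i) ^ 2 ≤ Real.exp t := by
          rw [le_div_iff₀ (hq i)] at h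
          nlinarith [h]
        have := Real.log_le_log (mul_pos (hq i) hσ2) h1
        rwa [Real.log_exp] at this
      rw [max_eq_right (by linarith)]
  have hconstraint : ∑ i, Real.log ((σ i) ^ 2 / min ((σ i) ^ 2) (ν / q i)) = 2 * R := by
    rw [← hgt]; exact sum_congr rfl (fun i _ => hterm i)
  refine ⟨ν, hν, hconstraint, ?_, ?_⟩
  · -- optimality
    intro x hx hxle hxcon
    have hsumlog : ∑ i, Real.log (min ((σ i) ^ 2) (ν / q i)) =
        (∑ i, Real.log ((σ i) ^ 2)) - 2 * R := by
      have h0 : ∑ i, (Real.log ((σ i) ^ 2) - Real.log (min ((σ i) ^ 2) (ν / q i))) = 2 * R := by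
        rw [← hconstraint]
        exact sum_congr rfl (fun i _ => (Real.log_div (pow_pos (hσ i) 2).ne' (hmpos i).ne').symm)
      rw [sum_sub_distrib] at h0
      linarith
    have hpt : ∀ i ∈ univ,
        q i * min ((σ i) ^ 2) (ν / q i) - ν * Real.log (min ((σ i) ^ 2) (ν / q i)) ≤
        q i * x i - ν * Real.log (x i) := by
      intro i _
      apply aux_pointwise ν (q i) (x i) _ hν (hq i) (hx i) (hmpos i)
      rcases le_total (ν / q i) ((σ i) ^ 2) with h | h
      · exact Or.inl (min_eq_right h)
      · refine Or.inr ⟨?_, ?_⟩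
        · rw [min_eq_left h]; exact hxle i
        · rw [min_eq_left h]
          rw [le_div_iff₀ (hq i)] at h
          nlinarith [h]
    have hsum := sum_le_sum hpt
    rw [sum_sub_distrib, sum_sub_distrib, ← mul_sum, ← mul_sum, hsumlog] at hsum
    have : ν * ((∑ i, Real.log ((σ i) ^ 2)) - 2 * R) ≤ ν * (∑ i, Real.log (x i)) :=
      mul_le_mul_of_nonneg_left hxcon hν.le
    linarith
  · -- interior regime
    intro hint
    have hlt : ∀ i, ν / q i < (σ i) ^ 2 := by
      intro i
      by_contra hcon
      push_neg at hcon
      have h := hint i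
      rw [min_eq_left hcon] at h
      exact lt_irrefl _ h
    have hmeq : ∀ i, min ((σ i) ^ 2) (ν / q i) = ν / q i := fun i =>
      min_eq_right (hlt i).le
    have hctlt : ∀ i, t < c i := by
      intro i
      have h1 : Real.exp t < q i * (σ i) ^ 2 := by
        have h := hlt i
        rw [div_lt_iff₀ (hq i)] at h
        nlinarith [h]
      have := Real.log_lt_log (Real.exp_pos t) h1
      rwa [Real.log_exp] at this
    have hgt2 : (∑ i, c i) - (k : ℝ) * t = 2 * R := by
      have heq : ∑ i, max (c i - t) 0 = ∑ i, (c i - t) :=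
        sum_congr rfl (fun i _ => max_eq_left (by linarith [hctlt i]))
      rw [heq, sum_sub_distrib, sum_const, card_univ, Fintype.card_fin,
        nsmul_eq_mul] at hgt
      linarith
    have hkne : (k : ℝ) ≠ 0 := Nat.cast_ne_zero.mpr hk.ne'
    have hteq : t = (1 / (k : ℝ)) * ((∑ i, c i) - 2 * R) := by
      field_simp
      linarith
    constructor
    · rw [hνdef, hteq]
    · have h0 : ∀ i ∈ univ, q i * min ((σ i) ^ 2) (ν / q i) = ν := by
        intro i _
        rw [hmeq i, mul_div_cancel₀ _ (hq i).ne']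
      rw [sum_congr rfl h0, sum_const, card_univ, Fintype.card_fin, nsmul_eq_mul]
end
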